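/- Let θ > 0 and c ≥ 0. There exist constants C > 0 and h₀ ∈ (0,1], depending only on θ and c, such that for every h ∈ (0, h₀] the following holds: let p₀, p₁, p₂ ∈ ℝ³ be the vertices of a triangle τ₁ all of whose side lengths lie in [θh, h] and whose area satisfies A(τ₁) ≥ θh², and let q₀, q₁, q₂ ∈ ℝ³ be the vertices of a triangle τ₂ such that | ‖q_i − q_j‖ − ‖p_i − p_j‖ | ≤ c h³ for every pair i ≠ j. Then | A(τ₂) − A(τ₁) | ≤ C h⁴. -/

import Mathlib

/-- The cross product on `ℝ³` with the Euclidean norm. -/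
noncomputable def cross3 (u v : EuclideanSpace ℝ (Fin 3)) : EuclideanSpace ℝ (Fin 3) :=
  (WithLp.equiv 2 (Fin 3 → ℝ)).symm
    ![u 1 * v 2 - u 2 * v 1, u 2 * v 0 - u 0 * v 2, u 0 * v 1 - u 1 * v 0]

/-- Area of the triangle with vertices `p₀ p₁ p₂ ∈ ℝ³`. -/
noncomputable def triArea (p₀ p₁ p₂ : EuclideanSpace ℝ (Fin 3)) : ℝ :=
  ‖cross3 (p₁ - p₀) (p₂ - p₀)‖ / 2

/-!
Lagrange's identity turns the cross-product formula for the area into Heron's formula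
`16 A² = Q(a², b², d²)`, with `Q` a quadratic form in the squared side lengths. Moving the side
lengths (all `O(h)`) by `ε = c h³` moves the squared sides by `O(h ε)`, hence `Q` by `O(h³ ε)` and
`A²` by `O(h⁶)`. Since `A' + A ≥ A ≥ θ h²`, dividing `A'² - A²` by it gives `|A' - A| = O(h⁴)`.
-/

open Matrix in
lemma cross3_eq_crossProduct (u v : EuclideanSpace ℝ (Fin 3)) :
    cross3 u v = WithLp.toLp 2 (u.ofLp ⨯₃ v.ofLp) := by
  rw [cross3, cross_apply]
  rfl

open Matrix in
lemma norm_cross3_sq (u v : EuclideanSpace ℝ (Fin 3)) :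
    ‖cross3 u v‖ ^ 2 = ‖u‖ ^ 2 * ‖v‖ ^ 2 - inner ℝ u v ^ 2 := by
  simp only [← real_inner_self_eq_norm_sq, EuclideanSpace.inner_eq_star_dotProduct,
    cross3_eq_crossProduct, star_trivial, cross_dot_cross]
  rw [dotProduct_comm v.ofLp u.ofLp]
  ring

def heronPoly (X Y Z : ℝ) : ℝ := (X + Y + Z) ^ 2 - 2 * (X ^ 2 + Y ^ 2 + Z ^ 2)

lemma sixteen_mul_triArea_sq (p₀ p₁ p₂ : EuclideanSpace ℝ (Fin 3)) :
    16 * triArea p₀ p₁ p₂ ^ 2 =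
      heronPoly (‖p₁ - p₀‖ ^ 2) (‖p₂ - p₀‖ ^ 2) (‖p₂ - p₁‖ ^ 2) := by
  have hside : ‖p₂ - p₁‖ ^ 2 =
      ‖p₂ - p₀‖ ^ 2 - 2 * inner ℝ (p₂ - p₀) (p₁ - p₀) + ‖p₁ - p₀‖ ^ 2 := by
    rw [← norm_sub_sq_real, sub_sub_sub_cancel_right]
  rw [triArea, div_pow, norm_cross3_sq, hside, heronPoly, real_inner_comm]
  ring

lemma abs_heronPoly_sub_le {X Y Z X' Y' Z' δ T : ℝ}
    (hX : |X' - X| ≤ δ) (hY : |Y' - Y| ≤ δ) (hZ : |Z' - Z| ≤ δ)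
    (hX' : |X' + X| ≤ T) (hY' : |Y' + Y| ≤ T) (hZ' : |Z' + Z| ≤ T) :
    |heronPoly X' Y' Z' - heronPoly X Y Z| ≤ 15 * δ * T := by
  -- `Q u' - Q u = B (u' - u) (u' + u)` for the polar form `B` of `Q`
  have hpolar : heronPoly X' Y' Z' - heronPoly X Y Z =
      ((X' - X) + (Y' - Y) + (Z' - Z)) * ((X' + X) + (Y' + Y) + (Z' + Z))
        - 2 * ((X' - X) * (X' + X) + (Y' - Y) * (Y' + Y) + (Z' - Z) * (Z' + Z)) := by
    unfold heronPoly; ring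
  have hsub : |(X' - X) + (Y' - Y) + (Z' - Z)| ≤ 3 * δ :=
    (abs_add_three _ _ _).trans (by linarith)
  have hadd : |(X' + X) + (Y' + Y) + (Z' + Z)| ≤ 3 * T :=
    (abs_add_three _ _ _).trans (by linarith)
  have hδ : 0 ≤ δ := (abs_nonneg _).trans hX
  rw [hpolar]
  calc _ ≤ |(X' - X) + (Y' - Y) + (Z' - Z)| * |(X' + X) + (Y' + Y) + (Z' + Z)|
        + 2 * (|X' - X| * |X' + X| + |Y' - Y| * |Y' + Y| + |Z' - Z| * |Z' + Z|) := by
        refine (abs_sub _ _).trans (add_le_add (abs_mul _ _).le ?_)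
        rw [abs_mul, abs_two, ← abs_mul, ← abs_mul, ← abs_mul]
        gcongr
        exact abs_add_three _ _ _
    _ ≤ (3 * δ) * (3 * T) + 2 * (δ * T + δ * T + δ * T) := by gcongr
    _ = 15 * δ * T := by ring

lemma abs_sq_sub_sq_le {a a' S ε : ℝ} (ha : |a| ≤ S) (ha' : |a'| ≤ S) (h : |a' - a| ≤ ε) :
    |a' ^ 2 - a ^ 2| ≤ 2 * S * ε := by
  have hS : 0 ≤ S := (abs_nonneg a).trans ha
  rw [sq_sub_sq, abs_mul]
  calc |a' + a| * |a' - a| ≤ (S + S) * ε :=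
        mul_le_mul ((abs_add_le _ _).trans (add_le_add ha' ha)) h (abs_nonneg _) (by linarith)
    _ = 2 * S * ε := by ring

lemma abs_sq_add_sq_le {a a' S : ℝ} (ha : |a| ≤ S) (ha' : |a'| ≤ S) :
    |a' ^ 2 + a ^ 2| ≤ 2 * S ^ 2 := by
  rw [abs_of_nonneg (by positivity), ← sq_abs a, ← sq_abs a']
  have := pow_le_pow_left₀ (abs_nonneg a) ha 2
  have := pow_le_pow_left₀ (abs_nonneg a') ha' 2
  linarith

lemma abs_triArea_sq_sub_le {p₀ p₁ p₂ q₀ q₁ q₂ : EuclideanSpace ℝ (Fin 3)} {R ε : ℝ}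
    (h₁ : ‖p₁ - p₀‖ ≤ R) (h₂ : ‖p₂ - p₀‖ ≤ R) (h₃ : ‖p₂ - p₁‖ ≤ R)
    (e₁ : |‖q₁ - q₀‖ - ‖p₁ - p₀‖| ≤ ε) (e₂ : |‖q₂ - q₀‖ - ‖p₂ - p₀‖| ≤ ε)
    (e₃ : |‖q₂ - q₁‖ - ‖p₂ - p₁‖| ≤ ε) :
    |triArea q₀ q₁ q₂ ^ 2 - triArea p₀ p₁ p₂ ^ 2| ≤ 4 * (R + ε) ^ 3 * ε := by
  set S := R + ε
  have side : ∀ {a a' : ℝ}, 0 ≤ a → a ≤ R → |a' - a| ≤ ε →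
      |a' ^ 2 - a ^ 2| ≤ 2 * S * ε ∧ |a' ^ 2 + a ^ 2| ≤ 2 * S ^ 2 := by
    intro a a' ha haR he
    have hε := (abs_nonneg _).trans he
    obtain ⟨he₁, he₂⟩ := abs_le.mp he
    have hbound : |a| ≤ S := abs_le.mpr ⟨by linarith, by linarith⟩
    have hbound' : |a'| ≤ S := abs_le.mpr ⟨by linarith, by linarith⟩
    exact ⟨abs_sq_sub_sq_le hbound hbound' he, abs_sq_add_sq_le hbound hbound'⟩
  obtain ⟨d₁, s₁⟩ := side (norm_nonneg _) h₁ e₁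
  obtain ⟨d₂, s₂⟩ := side (norm_nonneg _) h₂ e₂
  obtain ⟨d₃, s₃⟩ := side (norm_nonneg _) h₃ e₃
  have hheron := abs_heronPoly_sub_le d₁ d₂ d₃ s₁ s₂ s₃
  rw [← sixteen_mul_triArea_sq, ← sixteen_mul_triArea_sq, ← mul_sub, abs_mul,
    abs_of_pos (by norm_num : (0 : ℝ) < 16)] at hheron
  have hε : 0 ≤ ε := (abs_nonneg _).trans e₁
  have hS : 0 ≤ S := by linarith [norm_nonneg (p₁ - p₀)]
  linarith [mul_nonneg (pow_nonneg hS 3) hε]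

lemma abs_sub_le_abs_sq_sub_sq_div {A A' m : ℝ} (hm : 0 < m) (hA : m ≤ A) (hA' : 0 ≤ A') :
    |A' - A| ≤ |A' ^ 2 - A ^ 2| / m := by
  rw [le_div_iff₀ hm, sq_sub_sq, abs_mul, abs_of_nonneg (by linarith : 0 ≤ A' + A), mul_comm]
  exact mul_le_mul_of_nonneg_right (by linarith) (abs_nonneg _)

/-- Lemma 3.5, first estimate: supercloseness of triangle areas. -/
theorem triangle_area_supercloseness
    (θ c : ℝ) (hθ : 0 < θ) (hc : 0 ≤ c) :
    ∃ C > (0 : ℝ), ∃ h₀ > (0 : ℝ), h₀ ≤ 1 ∧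
      ∀ h : ℝ, 0 < h → h ≤ h₀ →
        ∀ p₀ p₁ p₂ q₀ q₁ q₂ : EuclideanSpace ℝ (Fin 3),
          θ * h ≤ ‖p₁ - p₀‖ → ‖p₁ - p₀‖ ≤ h →
          θ * h ≤ ‖p₂ - p₀‖ → ‖p₂ - p₀‖ ≤ h →
          θ * h ≤ ‖p₂ - p₁‖ → ‖p₂ - p₁‖ ≤ h →
          θ * h ^ 2 ≤ triArea p₀ p₁ p₂ →
          |‖q₁ - q₀‖ - ‖p₁ - p₀‖| ≤ c * h ^ 3 →
          |‖q₂ - q₀‖ - ‖p₂ - p₀‖| ≤ c * h ^ 3 →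
          |‖q₂ - q₁‖ - ‖p₂ - p₁‖| ≤ c * h ^ 3 →
          |triArea q₀ q₁ q₂ - triArea p₀ p₁ p₂| ≤ C * h ^ 4 := by
  refine ⟨4 * (1 + c) ^ 4 / θ, by positivity, 1, one_pos, le_rfl, ?_⟩
  intro h hh hh₁ p₀ p₁ p₂ q₀ q₁ q₂ _ h₁ _ h₂ _ h₃ hA e₁ e₂ e₃
  have hS : h + c * h ^ 3 ≤ (1 + c) * h := by
    linarith [mul_le_mul_of_nonneg_left (pow_le_of_le_one hh.le hh₁ three_ne_zero) hc]
  calc |triArea q₀ q₁ q₂ - triArea p₀ p₁ p₂|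
      ≤ |triArea q₀ q₁ q₂ ^ 2 - triArea p₀ p₁ p₂ ^ 2| / (θ * h ^ 2) :=
        abs_sub_le_abs_sq_sub_sq_div (by positivity) hA (by unfold triArea; positivity)
    _ ≤ 4 * (h + c * h ^ 3) ^ 3 * (c * h ^ 3) / (θ * h ^ 2) := by
        gcongr; exact abs_triArea_sq_sub_le h₁ h₂ h₃ e₁ e₂ e₃
    _ ≤ 4 * ((1 + c) * h) ^ 3 * ((1 + c) * h ^ 3) / (θ * h ^ 2) := by gcongr; linarith
    _ = 4 * (1 + c) ^ 4 / θ * h ^ 4 := by field_simp
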